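/- For any finite simple graph G and any positive integer r, it holds that tree-α(G^{r+2}) ≤ tree-α(G^r) and tree-μ(G^{r+2}) ≤ tree-μ(G^r). -/

import Mathlib

open SimpleGraph

namespace Paper

/-- A tree decomposition of a graph `G`. -/
structure TreeDecomp {V : Type} (G : SimpleGraph V) where
  ι : Type
  fin : Fintype ι
  tree : SimpleGraph ι
  isTree : tree.IsTree
  bag : ι → Set V
  mem_bag : ∀ v : V, ∃ t, v ∈ bag t
  edge_bag : ∀ ⦃u w : V⦄, G.Adj u w → ∃ t, u ∈ bag t ∧ w ∈ bag t
  coherent : ∀ v : V, (tree.induce {t | v ∈ bag t}).Connected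

/-- `M` is an induced matching in `G`: a set of edges, pairwise disjoint,
with no edge of `G` joining endpoints of distinct edges of `M`. -/
def IsInducedMatching {V : Type} (G : SimpleGraph V) (M : Finset (V × V)) : Prop :=
  (∀ p ∈ M, G.Adj p.1 p.2) ∧
    ∀ p ∈ M, ∀ q ∈ M, p ≠ q →
      (p.1 ≠ q.1 ∧ p.1 ≠ q.2 ∧ p.2 ≠ q.1 ∧ p.2 ≠ q.2) ∧
      (¬ G.Adj p.1 q.1 ∧ ¬ G.Adj p.1 q.2 ∧ ¬ G.Adj p.2 q.1 ∧ ¬ G.Adj p.2 q.2)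

/-- Every edge of `M` has an endpoint in `X`. -/
def Touches {V : Type} (M : Finset (V × V)) (X : Set V) : Prop :=
  ∀ p ∈ M, p.1 ∈ X ∨ p.2 ∈ X

/-- μ(𝒯): the maximum size of an induced matching of `G` all of whose edges
touch a common bag of the tree decomposition `D`. -/
noncomputable def mu {V : Type} (G : SimpleGraph V) (D : TreeDecomp G) : ℕ :=
  sSup {n | ∃ (t : D.ι) (M : Finset (V × V)),
    IsInducedMatching G M ∧ Touches M (D.bag t) ∧ M.card = n}

/-- Induced matching treewidth: minimum of μ(𝒯) over tree decompositions. -/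
noncomputable def treeMu {V : Type} (G : SimpleGraph V) : ℕ :=
  sInf {n | ∃ D : TreeDecomp G, mu G D = n}

/-- `S` is an independent set of `G`. -/
def IsIndepSet {V : Type} (G : SimpleGraph V) (S : Finset V) : Prop :=
  ∀ u ∈ S, ∀ v ∈ S, u ≠ v → ¬ G.Adj u v

/-- α(𝒯): the maximum size of an independent set of `G` contained in a bag. -/
noncomputable def alphaTD {V : Type} (G : SimpleGraph V) (D : TreeDecomp G) : ℕ :=
  sSup {n | ∃ (t : D.ι) (S : Finset V),
    IsIndepSet G S ∧ ↑S ⊆ D.bag t ∧ S.card = n}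

/-- Tree-independence number: minimum of α(𝒯) over tree decompositions. -/
noncomputable def treeAlpha {V : Type} (G : SimpleGraph V) : ℕ :=
  sInf {n | ∃ D : TreeDecomp G, alphaTD G D = n}

/-- The `k`-th power of `G`: distinct vertices adjacent iff their distance in `G`
is at most `k` (for `k = 0` this is the edgeless graph). -/
def power {V : Type} (G : SimpleGraph V) (k : ℕ) : SimpleGraph V :=
  SimpleGraph.fromRel (fun u v => G.Reachable u v ∧ G.dist u v ≤ k)

/-- The graph `G°[ℋ]` for a family `ℋ = {H j}` of subgraphs of `G`: vertices are
indices `j`, two distinct indices adjacent iff the subgraphs share a vertex or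
there is an edge of `G` between them. -/
def blowup {V J : Type} (G : SimpleGraph V) (H : J → G.Subgraph) : SimpleGraph J :=
  SimpleGraph.fromRel (fun i j =>
    ((H i).verts ∩ (H j).verts).Nonempty ∨
      ∃ u ∈ (H i).verts, ∃ v ∈ (H j).verts, G.Adj u v)

/-!
Thicken every bag of a tree decomposition of `G^r` to its closed neighbourhood in `G`; as
`r ≥ 1`, this is a tree decomposition of `G^{r+2}`. Moving each of two vertices by at most one
step changes their distance by at most two, so vertices at distance `> r + 2` stay at distance
`> r`. Hence an independent set of `G^{r+2}` inside a thickened bag moves injectively to an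
independent set of `G^r` inside the original bag, and an induced matching of `G^{r+2}` touching a
thickened bag is replaced, edge by edge, by edges of `G` at the original bag lying next to a
touching endpoint; these form an induced matching of `G^r` of the same size.
-/

section

variable {V : Type} {G : SimpleGraph V}

section Metric

variable {u v w x y a b : V} {k : ℕ}

lemma power_adj_iff : (power G k).Adj u v ↔ u ≠ v ∧ G.edist u v ≤ k := by
  have reach_dist_iff : ∀ u v, G.Reachable u v ∧ G.dist u v ≤ k ↔ G.edist u v ≤ k := by
    refine fun u v ↦ ⟨fun ⟨h, hd⟩ ↦ ?_, fun h ↦ ?_⟩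
    · exact h.coe_dist_eq_edist ▸ by exact_mod_cast hd
    · have hr : G.Reachable u v := edist_ne_top_iff_reachable.1 (ne_top_of_le_ne_top (by simp) h)
      exact ⟨hr, by exact_mod_cast hr.coe_dist_eq_edist ▸ h⟩
  simp [power, reach_dist_iff, edist_comm (u := v)]

lemma lt_edist_iff_ne_and_not_power_adj :
    (k : ℕ∞) < G.edist u v ↔ u ≠ v ∧ ¬ (power G k).Adj u v := by
  rw [power_adj_iff]
  constructor
  · intro h
    have hne : u ≠ v := by rintro rfl; simp at h
    exact ⟨hne, fun ⟨_, h'⟩ ↦ (h.trans_le h').false⟩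
  · exact fun ⟨hne, h⟩ ↦ lt_of_not_ge fun hk ↦ h ⟨hne, hk⟩

lemma power_adj_of_adj (hk : 0 < k) (h : G.Adj u v) : (power G k).Adj u v :=
  power_adj_iff.2 ⟨h.ne, (edist_eq_one_iff_adj.2 h).trans_le (by exact_mod_cast hk)⟩

lemma lt_edist_of_edist_le_one (hax : G.edist a x ≤ 1) (hby : G.edist b y ≤ 1)
    (hxy : (k + 2 : ℕ∞) < G.edist x y) : (k : ℕ∞) < G.edist a b := by
  refine lt_of_not_ge fun hab ↦ hxy.not_ge ?_
  calc G.edist x y ≤ G.edist x a + G.edist a b + G.edist b y := by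
        grw [← G.edist_triangle, ← G.edist_triangle]
    _ ≤ 1 + k + 1 := by grw [edist_comm, hax, hab, hby]
    _ = k + 2 := by ring

lemma exists_edist_le_edist_le_of_edist_le_add {m n : ℕ} (h : G.edist u w ≤ m + n) :
    ∃ v, G.edist u v ≤ m ∧ G.edist v w ≤ n := by
  obtain ⟨p, hp⟩ := (edist_ne_top_iff_reachable.1 (ne_top_of_le_ne_top (by simp) h)
    ).exists_walk_length_eq_edist
  refine ⟨p.getVert m, (edist_le (p.take m)).trans ?_, (edist_le (p.drop m)).trans ?_⟩
  · simp
  · rw [← hp] at h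
    simp only [Walk.drop_length, Nat.cast_le]
    exact_mod_cast (Nat.sub_le_iff_le_add'.2 (by exact_mod_cast h))

lemma exists_adj_edist_le_one_of_power_adj (hax : G.edist a x ≤ 1) (hxy : (power G k).Adj x y) :
    ∃ b, G.Adj a b ∧ G.edist b x ≤ 1 := by
  rcases edist_le_one_iff_adj_or_eq.1 hax with h | rfl
  · exact ⟨x, h, by simp⟩
  obtain ⟨hne, hd⟩ := power_adj_iff.1 hxy
  obtain ⟨p, -⟩ := (edist_ne_top_iff_reachable.1 (ne_top_of_le_ne_top (by simp) hd)
    ).exists_walk_length_eq_edist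
  have hp : ¬ p.Nil := fun h ↦ hne h.eq
  exact ⟨p.snd, p.adj_snd hp, (edist_eq_one_iff_adj.2 (p.adj_snd hp).symm).le⟩

end Metric

namespace TreeDecomp

def single (G : SimpleGraph V) : TreeDecomp G where
  ι := Unit
  fin := inferInstance
  tree := ⊥
  isTree := .of_subsingleton
  bag _ := Set.univ
  mem_bag _ := ⟨(), trivial⟩
  edge_bag _ _ _ := ⟨(), trivial, trivial⟩
  coherent _ := @Connected.of_subsingleton _ _ ⟨⟨(), trivial⟩⟩ _

instance : Nonempty (TreeDecomp G) := ⟨single G⟩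

lemma exists_mem_bag_of_edist_le {k : ℕ} (D : TreeDecomp (power G k)) {u w : V}
    (h : G.edist u w ≤ k) : ∃ t, u ∈ D.bag t ∧ w ∈ D.bag t := by
  by_cases huw : u = w
  · obtain ⟨t, ht⟩ := D.mem_bag u
    exact ⟨t, ht, huw ▸ ht⟩
  · exact D.edge_bag (power_adj_iff.2 ⟨huw, h⟩)

variable {r : ℕ}

def thicken (D : TreeDecomp (power G r)) (hr : 0 < r) : TreeDecomp (power G (r + 2)) where
  ι := D.ι
  fin := D.fin
  tree := D.tree
  isTree := D.isTree
  bag t := {v | ∃ a ∈ D.bag t, G.edist a v ≤ 1}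
  mem_bag v := by
    obtain ⟨t, ht⟩ := D.mem_bag v
    exact ⟨t, v, ht, by simp⟩
  edge_bag u w h := by
    have huw : G.edist u w ≤ (1 : ℕ) + (r + 1 : ℕ) :=
      (power_adj_iff.1 h).2.trans_eq (by push_cast; ring)
    obtain ⟨u', huu', hu'w⟩ := exists_edist_le_edist_le_of_edist_le_add huw
    obtain ⟨w', hu'w', hw'w⟩ := exists_edist_le_edist_le_of_edist_le_add (m := r) (n := 1) hu'w
    obtain ⟨t, hu't, hw't⟩ := D.exists_mem_bag_of_edist_le hu'w'
    exact ⟨t, ⟨u', hu't, edist_comm.trans_le huu'⟩, ⟨w', hw't, hw'w⟩⟩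
  -- The new subtree of `v` is the union of the old subtrees of its closed neighbours `a`, each
  -- meeting that of `v` since `av` is an edge of `G^r`.
  coherent v := by
    obtain ⟨t₀, ht₀⟩ := D.mem_bag v
    refine induce_connected_of_patches t₀ ⟨v, ht₀, by simp⟩ ?_
    rintro s ⟨a, has, hav⟩
    obtain ⟨t, hat, hvt⟩ := D.exists_mem_bag_of_edist_le (hav.trans (by exact_mod_cast hr))
    refine ⟨{t | v ∈ D.bag t} ∪ {t | a ∈ D.bag t}, ?_, .inl ht₀, .inr has, ?_⟩
    · rintro t (ht | ht)
      exacts [⟨v, ht, by simp⟩, ⟨a, ht, hav⟩]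
    · exact (induce_union_connected (D.coherent v).preconnected (D.coherent a).preconnected
        ⟨t, hvt, hat⟩).preconnected _ _

end TreeDecomp

section Shrink

variable {k : ℕ}

lemma isIndepSet_power_iff {S : Finset V} :
    IsIndepSet (power G k) S ↔ ∀ u ∈ S, ∀ v ∈ S, u ≠ v → (k : ℕ∞) < G.edist u v := by
  simp only [IsIndepSet, lt_edist_iff_ne_and_not_power_adj]
  grind

lemma isInducedMatching_power_iff {M : Finset (V × V)} :
    IsInducedMatching (power G k) M ↔ (∀ p ∈ M, (power G k).Adj p.1 p.2) ∧
      ∀ p ∈ M, ∀ q ∈ M, p ≠ q →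
        ∀ x ∈ ({p.1, p.2} : Set V), ∀ y ∈ ({q.1, q.2} : Set V), (k : ℕ∞) < G.edist x y := by
  simp only [IsInducedMatching, Set.mem_insert_iff, Set.mem_singleton_iff, forall_eq_or_imp,
    forall_eq, lt_edist_iff_ne_and_not_power_adj]
  grind

variable [DecidableEq V]

lemma IsIndepSet.image_of_edist_le_one {S : Finset V} (hS : IsIndepSet (power G (k + 2)) S)
    {g : V → V} (hg : ∀ v ∈ S, G.edist (g v) v ≤ 1) :
    IsIndepSet (power G k) (S.image g) ∧ (S.image g).card = S.card := by
  rw [isIndepSet_power_iff] at hS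
  have far : ∀ u ∈ S, ∀ v ∈ S, u ≠ v → (k : ℕ∞) < G.edist (g u) (g v) :=
    fun u hu v hv huv ↦
      lt_edist_of_edist_le_one (hg u hu) (hg v hv) (by exact_mod_cast hS u hu v hv huv)
  refine ⟨isIndepSet_power_iff.2 ?_, Finset.card_image_of_injOn fun u hu v hv huv ↦ ?_⟩
  · simp only [Finset.forall_mem_image]
    exact fun u hu v hv hne ↦ far u hu v hv (ne_of_apply_ne g hne)
  · by_contra hne
    simpa [huv] using far u hu v hv hne

lemma IsInducedMatching.image_of_edist_le_one {M : Finset (V × V)}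
    (hM : IsInducedMatching (power G (k + 2)) M) {f : V × V → V × V}
    (hf_adj : ∀ p ∈ M, (power G k).Adj (f p).1 (f p).2)
    (hf_near : ∀ p ∈ M, ∃ x ∈ ({p.1, p.2} : Set V),
      G.edist (f p).1 x ≤ 1 ∧ G.edist (f p).2 x ≤ 1) :
    IsInducedMatching (power G k) (M.image f) ∧ (M.image f).card = M.card := by
  rw [isInducedMatching_power_iff] at hM
  have far : ∀ p ∈ M, ∀ q ∈ M, p ≠ q → ∀ u ∈ ({(f p).1, (f p).2} : Set V),
      ∀ v ∈ ({(f q).1, (f q).2} : Set V), (k : ℕ∞) < G.edist u v := by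
    intro p hp q hq hpq u hu v hv
    obtain ⟨x, hx, hx₁, hx₂⟩ := hf_near p hp
    obtain ⟨y, hy, hy₁, hy₂⟩ := hf_near q hq
    have hxy : ((k + 2 : ℕ) : ℕ∞) < G.edist x y := hM.2 p hp q hq hpq x hx y hy
    push_cast at hxy
    rcases hu with rfl | rfl <;> rcases hv with rfl | rfl <;>
      exact lt_edist_of_edist_le_one ‹_› ‹_› hxy
  refine ⟨isInducedMatching_power_iff.2 ⟨?_, ?_⟩,
    Finset.card_image_of_injOn fun p hp q hq hpq ↦ ?_⟩
  · simpa only [Finset.forall_mem_image] using hf_adj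
  · simp only [Finset.forall_mem_image]
    exact fun p hp q hq hne ↦ far p hp q hq (ne_of_apply_ne f hne)
  · by_contra hne
    simpa [hpq] using far p hp q hq hne (f p).1 (by simp) (f p).1 (by simp [hpq])

end Shrink

section Thicken

variable [Fintype V] {r : ℕ}

lemma alphaTD_thicken_le (D : TreeDecomp (power G r)) (hr : 0 < r) :
    alphaTD (power G (r + 2)) (D.thicken hr) ≤ alphaTD (power G r) D := by
  classical
  refine csSup_le_csSup' ⟨Fintype.card V, ?_⟩ ?_
  · rintro _ ⟨t, S, -, -, rfl⟩
    exact S.card_le_univ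
  rintro _ ⟨t, S, hS, hSt, rfl⟩
  choose! g hgt hgv using fun v (hv : v ∈ S) ↦ hSt hv
  obtain ⟨hind, hcard⟩ := hS.image_of_edist_le_one hgv
  exact ⟨t, S.image g, hind, by simpa [Set.subset_def] using hgt, hcard⟩

lemma mu_thicken_le (D : TreeDecomp (power G r)) (hr : 0 < r) :
    mu (power G (r + 2)) (D.thicken hr) ≤ mu (power G r) D := by
  classical
  refine csSup_le_csSup' ⟨Fintype.card (V × V), ?_⟩ ?_
  · rintro _ ⟨t, M, -, -, rfl⟩
    exact M.card_le_univ
  rintro _ ⟨t, M, hM, hMt, rfl⟩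
  have hex : ∀ p ∈ M, ∃ q : V × V, G.Adj q.1 q.2 ∧ q.1 ∈ D.bag t ∧
      ∃ x ∈ ({p.1, p.2} : Set V), G.edist q.1 x ≤ 1 ∧ G.edist q.2 x ≤ 1 := by
    intro p hp
    rcases hMt p hp with ⟨a, ha, hax⟩ | ⟨a, ha, hax⟩
    · obtain ⟨b, hab, hbx⟩ := exists_adj_edist_le_one_of_power_adj hax (hM.1 p hp)
      exact ⟨(a, b), hab, ha, p.1, by simp, hax, hbx⟩
    · obtain ⟨b, hab, hbx⟩ := exists_adj_edist_le_one_of_power_adj hax (hM.1 p hp).symm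
      exact ⟨(a, b), hab, ha, p.2, by simp, hax, hbx⟩
  choose! f hf_adj hf_bag hf_near using hex
  obtain ⟨hind, hcard⟩ :=
    hM.image_of_edist_le_one (fun p hp ↦ power_adj_of_adj hr (hf_adj p hp)) hf_near
  exact ⟨t, M.image f, hind, Finset.forall_mem_image.2 fun p hp ↦ .inl (hf_bag p hp), hcard⟩

end Thicken

end

/-- tree-α(G^{r+2}) ≤ tree-α(G^r) and tree-μ(G^{r+2}) ≤ tree-μ(G^r). -/
theorem stmt4 {V : Type} [Fintype V] (G : SimpleGraph V) (r : ℕ) (hr : 0 < r) :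
    treeAlpha (power G (r + 2)) ≤ treeAlpha (power G r) ∧
    treeMu (power G (r + 2)) ≤ treeMu (power G r) :=
  ⟨ciInf_mono_of_forall_exists (OrderBot.bddBelow _)
      fun D ↦ ⟨D.thicken hr, alphaTD_thicken_le D hr⟩,
    ciInf_mono_of_forall_exists (OrderBot.bddBelow _)
      fun D ↦ ⟨D.thicken hr, mu_thicken_le D hr⟩⟩

end Paper
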